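/- arXiv:1805.10203 — 2 statements merged into one kernel-verified Lean document; each statement's English description precedes it below -/
import Mathlib

section
/- Let m ≥ 3 be an integer. If x ∈ D1 and y ∈ D2, then Σ_{1≤i<j≤m} x_{ij} y_{ij} = 0. -/
/-!
The cocycle condition makes `y` a coboundary: fixing a base point `k`, `y i j = f i - f j` with
`f i = y i k`. Pairing an antisymmetric array with zero row (hence zero column) sums against a
coboundary gives zero, and by symmetry of `x i j * y i j` the full double sum is twice the sum
over `i < j`.
-/

open Finset

section

variable {ι : Type*}

theorem eq_sub_of_cocycle {G : Type*} [AddCommGroup G] {y : ι → ι → G}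
    (hy_anti : ∀ i j, y i j = -y j i)
    (hcoc : ∀ i j k, y i j + y j k + y k i = 0) (i j k : ι) : y i j = y i k - y j k := by
  have h := hcoc i j k
  rw [hy_anti k i, add_neg_eq_zero] at h
  rw [← h, add_sub_cancel_right]

theorem sum_sum_mul_sub_eq_zero [Fintype ι] {R : Type*} [CommRing R] {x : ι → ι → R}
    (hrow : ∀ i, ∑ j, x i j = 0) (hcol : ∀ j, ∑ i, x i j = 0) (f : ι → R) :
    ∑ i, ∑ j, x i j * (f i - f j) = 0 := by
  simp only [mul_sub, sum_sub_distrib, ← sum_mul, hrow, zero_mul, zero_sub, sum_neg_distrib]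
  rw [sum_comm]
  simp only [← sum_mul, hcol, zero_mul, sum_const_zero, neg_zero]

variable [LinearOrder ι]

/-- The cocycle sum is invariant under cyclic shifts of `(i, j, k)` and changes sign under a
transposition, so each ordering of the indices reduces to the increasing one. -/
theorem cocycle_of_cocycle_lt {R : Type*} [Field R] [CharZero R] {y : ι → ι → R}
    (hy_anti : ∀ i j, y i j = -y j i)
    (hy : ∀ i j k, i < j → j < k → y i j + y j k + y k i = 0) (i j k : ι) :
    y i j + y j k + y k i = 0 := by
  rcases lt_trichotomy i j with hij | hij | hij <;>
  rcases lt_trichotomy j k with hjk | hjk | hjk <;>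
  rcases lt_trichotomy i k with hik | hik | hik <;> grind

theorem two_mul_sum_ite_lt [Fintype ι] {R : Type*} [CommSemiring R] {g : ι → ι → R}
    (hsymm : ∀ i j, g i j = g j i) (hdiag : ∀ i, g i i = 0) :
    2 * ∑ i, ∑ j, (if i < j then g i j else 0) = ∑ i, ∑ j, g i j := by
  have hsplit : ∀ i j, g i j = (if i < j then g i j else 0) + (if j < i then g j i else 0) := by
    intro i j
    rcases lt_trichotomy i j with h | rfl | h
    · simp [h, h.not_gt]
    · simp [hdiag]
    · simp [h, h.not_gt, hsymm i j]
  calc 2 * ∑ i, ∑ j, (if i < j then g i j else 0)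
      = ∑ i, ∑ j, (if i < j then g i j else 0) + ∑ i, ∑ j, (if j < i then g j i else 0) := by
        rw [two_mul, sum_comm (f := fun i j => if j < i then g j i else 0)]
    _ = ∑ i, ∑ j, g i j := by
        simp only [← sum_add_distrib, ← hsplit]

end

theorem hmrr_D1_D2_orthogonal_general (m : ℕ) (x y : Fin m → Fin m → ℝ)
    (hx_anti : ∀ i j : Fin m, x i j = - x j i)
    (hy_anti : ∀ i j : Fin m, y i j = - y j i)
    (hx : ∀ i : Fin m, ∑ j ∈ Finset.univ.filter (· ≠ i), x i j = 0)
    (hy : ∀ i j k : Fin m, i < j → j < k → y i j + y j k + y k i = 0) :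
    ∑ i : Fin m, ∑ j : Fin m, (if i < j then x i j * y i j else 0) = 0 := by
  have hxdiag : ∀ i, x i i = 0 := fun i => by linarith [hx_anti i i]
  have hrow : ∀ i, ∑ j, x i j = 0 := fun i => by
    rw [← sum_erase univ (hxdiag i), ← filter_ne', hx i]
  have hcol : ∀ j, ∑ i, x i j = 0 := fun j => by
    rw [sum_congr rfl fun i _ => hx_anti i j, sum_neg_distrib, hrow j, neg_zero]
  have hfull : ∑ i, ∑ j, x i j * y i j = 0 := by
    rcases isEmpty_or_nonempty (Fin m) with hempty | ⟨⟨k⟩⟩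
    · simp
    · simpa only [← eq_sub_of_cocycle hy_anti (cocycle_of_cocycle_lt hy_anti hy) _ _ k]
        using sum_sum_mul_sub_eq_zero hrow hcol (y · k)
  have hhalf := two_mul_sum_ite_lt (g := fun i j => x i j * y i j)
    (fun i j => by rw [hx_anti i j, hy_anti i j]; ring) (fun i => by simp [hxdiag])
  linarith

/-- **Lemma 25.3.** Let `m ≥ 3`. If `x ∈ D1` (antisymmetric with zero row sums) and
`y ∈ D2` (antisymmetric satisfying the cocycle equations `y i j + y j k + y k i = 0`
for `i < j < k`), then `∑_{i < j} x i j * y i j = 0`. -/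
theorem hmrr_D1_D2_orthogonal (m : ℕ) (hm : 3 ≤ m) (x y : Fin m → Fin m → ℝ)
    (hx_anti : ∀ i j : Fin m, x i j = - x j i)
    (hy_anti : ∀ i j : Fin m, y i j = - y j i)
    (hx : ∀ i : Fin m, ∑ j ∈ Finset.univ.filter (· ≠ i), x i j = 0)
    (hy : ∀ i j k : Fin m, i < j → j < k → y i j + y j k + y k i = 0) :
    ∑ i : Fin m, ∑ j : Fin m, (if i < j then x i j * y i j else 0) = 0 :=
  hmrr_D1_D2_orthogonal_general m x y hx_anti hy_anti hx hy
end

section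
/- Let m ≥ 3 be an integer. Then there exist linearly independent elements F_1,…,F_{m−1} ∈ D2 such that (F_p)_{ij} ≠ 0 for every 1 ≤ p ≤ m−1 and every 1 ≤ i ≠ j ≤ m, and such that Σ_{p=1}^{m−1} ((F_p)_{ij})^2 = 1 for every pair 1 ≤ i < j ≤ m. -/
/-!
Take `F p i j = (a_p i - a_p j) / √2`, where `a_1, …, a_{m-1}` is an orthonormal basis of the
hyperplane `∑ xᵢ = 0` of `ℝ^m`. The cocycle identities are automatic; Parseval applied to
`eᵢ - eⱼ` gives `∑_p (a_p i - a_p j)² = ‖eᵢ - eⱼ‖² = 2`; and linear independence holds because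
`x ↦ (xᵢ - xⱼ)ᵢⱼ` is injective on the hyperplane. It remains to choose the basis so that no `a_p`
is orthogonal to any `eᵢ - eⱼ`. Reflecting a fixed orthonormal basis in a line `ℝ u` does this
for generic `u`: after clearing the factor `‖u‖²`, each condition `⟪R_u a_p, w⟫ ≠ 0` is the
non-vanishing of a nonzero quadratic polynomial in the coordinates of `u`.
-/

open RealInnerProductSpace

theorem MvPolynomial.exists_forall_eval_ne_zero {R σ ι : Type*} [CommRing R] [IsDomain R]
    [Infinite R] [Fintype ι] (P : ι → MvPolynomial σ R) (hP : ∀ i, P i ≠ 0) :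
    ∃ x : σ → R, ∀ i, eval x (P i) ≠ 0 := by
  have hprod : ∏ i, P i ≠ 0 := Finset.prod_ne_zero_iff.mpr fun i _ ↦ hP i
  obtain ⟨x, hx⟩ : ∃ x, eval x (∏ i, P i) ≠ 0 := by
    by_contra! h
    exact hprod (MvPolynomial.funext fun x ↦ by rw [h x, map_zero])
  rw [map_prod, Finset.prod_ne_zero_iff] at hx
  exact ⟨x, fun i ↦ hx i (Finset.mem_univ i)⟩

theorem norm_sq_mul_inner_reflection_singleton {V : Type*} [NormedAddCommGroup V]
    [InnerProductSpace ℝ V] (u v w : V) :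
    ‖u‖ ^ 2 * ⟪(ℝ ∙ u).reflection v, w⟫ = 2 * ⟪u, v⟫ * ⟪u, w⟫ - ‖u‖ ^ 2 * ⟪v, w⟫ := by
  rcases eq_or_ne u 0 with rfl | hu
  · simp
  have : ‖u‖ ≠ 0 := norm_ne_zero_iff.mpr hu
  simp only [Submodule.reflection_singleton_apply, two_smul, inner_sub_left, inner_add_left,
    real_inner_smul_left, RCLike.ofReal_real_eq_id, id]
  field_simp
  ring

section ReflectionInnerPoly

open MvPolynomial

variable {ι : Type*} [Fintype ι]

/-- If `x` are the coordinates of `u` in an orthonormal basis `b` and `c i = ⟪b i, w⟫`, this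
polynomial evaluates to `‖u‖² ⟪(ℝ ∙ u).reflection (b p), w⟫`. -/
noncomputable def reflectionInnerPoly (c : ι → ℝ) (p : ι) : MvPolynomial ι ℝ :=
  2 * X p * ∑ k, C (c k) * X k - C (c p) * ∑ k, X k ^ 2

theorem eval_reflectionInnerPoly (c x : ι → ℝ) (p : ι) :
    eval x (reflectionInnerPoly c p) = 2 * x p * ∑ k, c k * x k - c p * ∑ k, x k ^ 2 := by
  simp [reflectionInnerPoly]

theorem reflectionInnerPoly_ne_zero {c : ι → ℝ} (hc : c ≠ 0) (p : ι) :
    reflectionInnerPoly c p ≠ 0 := by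
  classical
  intro h
  have hx : ∀ x : ι → ℝ, 2 * x p * ∑ k, c k * x k = c p * ∑ k, x k ^ 2 := fun x ↦ by
    simpa [eval_reflectionInnerPoly, sub_eq_zero] using congr_arg (eval x) h
  have hcp : c p = 0 := by
    have := hx (Pi.single p 1)
    simp only [Pi.single_apply, mul_ite, mul_one, mul_zero, Finset.sum_ite_eq', Finset.mem_univ,
      if_true, ite_pow, one_pow, zero_pow two_ne_zero] at this
    linarith
  have hsq : ∑ k, c k * c k = 0 := by
    have := hx (c + Pi.single p 1)
    simp only [Pi.add_apply, Pi.single_apply, mul_add, mul_ite, mul_one, mul_zero,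
      Finset.sum_add_distrib, Finset.sum_ite_eq', Finset.mem_univ, if_true, hcp, zero_mul] at this
    linarith
  exact hc (funext fun k ↦ (Finset.sum_mul_self_eq_zero_iff _ _).mp hsq k (Finset.mem_univ k))

end ReflectionInnerPoly

theorem OrthonormalBasis.exists_forall_inner_ne_zero {ι κ V : Type*} [Fintype ι] [Fintype κ]
    [NormedAddCommGroup V] [InnerProductSpace ℝ V] (b : OrthonormalBasis ι ℝ V) (w : κ → V)
    (hw : ∀ k, w k ≠ 0) : ∃ b' : OrthonormalBasis ι ℝ V, ∀ p k, ⟪b' p, w k⟫ ≠ 0 := by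
  let c : κ → ι → ℝ := fun k i ↦ ⟪b i, w k⟫
  have hc : ∀ k, c k ≠ 0 := fun k h ↦ hw k <| by
    rw [← b.sum_repr' (w k)]
    simp only [c, funext_iff, Pi.zero_apply] at h
    simp [h]
  obtain ⟨x, hx⟩ := MvPolynomial.exists_forall_eval_ne_zero
    (fun pk : ι × κ ↦ reflectionInnerPoly (c pk.2) pk.1)
    (fun pk ↦ reflectionInnerPoly_ne_zero (hc pk.2) pk.1)
  let u := ∑ i, x i • b i
  refine ⟨b.map (ℝ ∙ u).reflection, fun p k h ↦ hx (p, k) ?_⟩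
  have key := norm_sq_mul_inner_reflection_singleton u (b p) (w k)
  have hup : ⟪u, b p⟫ = x p := b.orthonormal.inner_left_fintype x p
  have huw : ⟪u, w k⟫ = ∑ i, c k i * x i := by
    simp only [u, sum_inner, real_inner_smul_left, c, mul_comm]
  have hu : ‖u‖ ^ 2 = ∑ i, x i ^ 2 := by
    rw [← b.sum_sq_norm_inner_right u]
    simp [u, b.orthonormal.inner_right_fintype]
  rw [OrthonormalBasis.map_apply] at h
  rw [h, mul_zero, hup, huw, hu] at key
  rw [eval_reflectionInnerPoly]
  linarith

section ZeroSumHyperplane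

noncomputable def zeroSumHyperplane (ι : Type*) [Fintype ι] : Submodule ℝ (EuclideanSpace ℝ ι) :=
  (ℝ ∙ WithLp.toLp 2 (1 : ι → ℝ))ᗮ

noncomputable def pairDiff (ι : Type*) : EuclideanSpace ℝ ι →ₗ[ℝ] ι → ι → ℝ where
  toFun x i j := x i - x j
  map_add' x y := by ext i j; simp only [PiLp.add_apply, Pi.add_apply]; ring
  map_smul' c x := by
    ext i j
    simp only [PiLp.smul_apply, smul_eq_mul, RingHom.id_apply, Pi.smul_apply]
    ring

variable {ι : Type*} [Fintype ι]

theorem mem_zeroSumHyperplane {x : EuclideanSpace ℝ ι} :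
    x ∈ zeroSumHyperplane ι ↔ ∑ i, x i = 0 := by
  simp [zeroSumHyperplane, Submodule.mem_orthogonal_singleton_iff_inner_right, PiLp.inner_apply]

theorem finrank_zeroSumHyperplane [Nonempty ι] :
    Module.finrank ℝ (zeroSumHyperplane ι) = Fintype.card ι - 1 := by
  have : Fact (Module.finrank ℝ (EuclideanSpace ℝ ι) = Fintype.card ι - 1 + 1) :=
    ⟨by rw [finrank_euclideanSpace, Nat.sub_add_cancel Fintype.card_pos]⟩
  refine Submodule.finrank_orthogonal_span_singleton fun h ↦ ?_
  simpa using congr_arg (· (Classical.arbitrary ι)) h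

theorem single_sub_single_mem_zeroSumHyperplane [DecidableEq ι] (i j : ι) :
    EuclideanSpace.single i 1 - EuclideanSpace.single j 1 ∈ zeroSumHyperplane ι := by
  simp [mem_zeroSumHyperplane, Finset.sum_sub_distrib]

theorem eq_zero_of_mem_zeroSumHyperplane {x : EuclideanSpace ℝ ι} (hx : x ∈ zeroSumHyperplane ι)
    (hconst : ∀ i j, x i = x j) : x = 0 := by
  ext i
  have : Nonempty ι := ⟨i⟩
  have : Fintype.card ι * x i = 0 := by
    rw [← mem_zeroSumHyperplane.mp hx]
    simp [hconst _ i]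
  simpa [Fintype.card_ne_zero] using this

theorem ker_pairDiff_comp_subtype :
    LinearMap.ker ((pairDiff ι).comp (zeroSumHyperplane ι).subtype) = ⊥ := by
  refine LinearMap.ker_eq_bot'.mpr fun x hx ↦ Subtype.ext ?_
  refine eq_zero_of_mem_zeroSumHyperplane x.2 fun i j ↦ sub_eq_zero.mp ?_
  exact congr_fun (congr_fun hx i) j

theorem inner_single_sub_single [DecidableEq ι] (x : EuclideanSpace ℝ ι) (i j : ι) :
    ⟪x, EuclideanSpace.single i 1 - EuclideanSpace.single j 1⟫ = x i - x j := by
  simp [inner_sub_right, EuclideanSpace.inner_single_right]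

theorem OrthonormalBasis.sum_sq_sub_apply_eq_two {κ : Type*} [Fintype κ] [DecidableEq ι]
    (b : OrthonormalBasis κ ℝ (zeroSumHyperplane ι)) {i j : ι} (hij : i ≠ j) :
    ∑ p, ((b p : EuclideanSpace ℝ ι) i - (b p : EuclideanSpace ℝ ι) j) ^ 2 = 2 := by
  let d : zeroSumHyperplane ι := ⟨_, single_sub_single_mem_zeroSumHyperplane i j⟩
  have hd (x : zeroSumHyperplane ι) :
      ⟪x, d⟫ = (x : EuclideanSpace ℝ ι) i - (x : EuclideanSpace ℝ ι) j :=
    inner_single_sub_single (x : EuclideanSpace ℝ ι) i j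
  have := b.sum_inner_mul_inner d d
  simp only [real_inner_comm _ d, hd, ← sq] at this
  rw [this]
  simp [d, hij, Ne.symm hij]
  norm_num

end ZeroSumHyperplane

/-- **Test functions in the proof of Lemma 23.** For `m ≥ 3` there are linearly
independent elements `F 0, …, F (m - 2)` of `D2` (antisymmetric arrays satisfying the
cocycle equations) all of whose components `(F p) i j` (`i ≠ j`) are nonzero, and such
that `∑_p ((F p) i j)^2 = 1` for every pair `i < j`. -/
theorem exists_linearIndependent_partition_of_unity_in_D2 (m : ℕ) (hm : 3 ≤ m) :
    ∃ F : Fin (m - 1) → (Fin m → Fin m → ℝ),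
      (∀ p : Fin (m - 1), ∀ i j : Fin m, F p i j = - F p j i) ∧
      (∀ p : Fin (m - 1), ∀ i j k : Fin m, i < j → j < k →
        F p i j + F p j k + F p k i = 0) ∧
      LinearIndependent ℝ F ∧
      (∀ p : Fin (m - 1), ∀ i j : Fin m, i ≠ j → F p i j ≠ 0) ∧
      (∀ i j : Fin m, i < j → ∑ p : Fin (m - 1), (F p i j) ^ 2 = 1) := by
  have : NeZero m := ⟨by omega⟩
  let H := zeroSumHyperplane (Fin m)
  let d : {q : Fin m × Fin m // q.1 ≠ q.2} → H :=
    fun q ↦ ⟨_, single_sub_single_mem_zeroSumHyperplane q.1.1 q.1.2⟩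
  have hd : ∀ q, d q ≠ 0 := fun q h ↦ by
    simpa [d, q.2] using congr_arg (fun x : H ↦ (x : EuclideanSpace ℝ (Fin m)) q.1.1) h
  obtain ⟨b, hb⟩ := ((stdOrthonormalBasis ℝ H).reindex (finCongr (by
    rw [finrank_zeroSumHyperplane, Fintype.card_fin]))).exists_forall_inner_ne_zero d hd
  let T := (√2)⁻¹ • (pairDiff (Fin m)).comp H.subtype
  have hT (x : H) (i j : Fin m) :
      T x i j = (√2)⁻¹ * ((x : EuclideanSpace ℝ (Fin m)) i - (x : EuclideanSpace ℝ (Fin m)) j) :=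
    rfl
  refine ⟨T ∘ b, fun p i j ↦ ?_, fun p i j k _ _ ↦ ?_, ?_, fun p i j hij ↦ ?_, fun i j hij ↦ ?_⟩
  · simp only [Function.comp_apply, hT]; ring
  · simp only [Function.comp_apply, hT]; ring
  · exact b.orthonormal.linearIndependent.map' T <| by
      rw [LinearMap.ker_smul _ _ (by positivity), ker_pairDiff_comp_subtype]
  · have hbij := hb p ⟨(i, j), hij⟩
    rw [Submodule.coe_inner, inner_single_sub_single] at hbij
    exact mul_ne_zero (by positivity) hbij
  · simp only [Function.comp_apply, hT, mul_pow, ← Finset.mul_sum,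
      b.sum_sq_sub_apply_eq_two hij.ne]
    simp
end
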